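/- arXiv:1408.1441 — 5 statements merged into one kernel-verified Lean document; each statement's English description precedes it below -/
import Mathlib

section
/- (Schwarz mean value theorem) Let I be a real interval, let f : I → ℝ be n times continuously differentiable on I, and let x₀, …, xₙ ∈ I. Then there exists τ ∈ I such that the determinant of the (n+1)×(n+1) matrix whose i-th row is (1, x_i, x_i², …, x_i^{n−1}, f(x_i)) equals (f^{(n)}(τ)/n!) · V(x₀, …, xₙ). -/
open Polynomial Set Matrix Finset

open Polynomial Set

lemma polyEval_contDiff (p : ℝ[X]) : ContDiff ℝ (⊤ : ℕ∞) fun x : ℝ => p.eval x := by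
  induction p using Polynomial.induction_on' with
  | add p q hp hq => simpa [Polynomial.eval_add] using hp.add hq
  | monomial k a =>
      simpa [Polynomial.eval_monomial] using (contDiff_const (c := a)).mul (contDiff_id.pow k)

lemma iteratedDeriv_polyEval (p : ℝ[X]) (k : ℕ) :
    iteratedDeriv k (fun x : ℝ => p.eval x) = fun x => (derivative^[k] p).eval x := by
  induction k with
  | zero => simp
  | succ k ih =>
      rw [iteratedDeriv_succ, ih]
      funext x
      rw [Function.iterate_succ_apply']
      exact Polynomial.deriv _

lemma iterWithin_eq_iter (k : ℕ) (h : ℝ → ℝ) {I O : Set ℝ} (hO : IsOpen O) (hOI : O ⊆ I)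
    {τ : ℝ} (hτ : τ ∈ O) : iteratedDerivWithin k h I τ = iteratedDeriv k h τ := by
  have h1 : iteratedDerivWithin k h I τ = iteratedDerivWithin k h O τ := by
    rw [iteratedDerivWithin_eq_iteratedFDerivWithin, iteratedDerivWithin_eq_iteratedFDerivWithin,
      ← Set.inter_eq_self_of_subset_right hOI, iteratedFDerivWithin_inter (hO.mem_nhds hτ)]
  rw [h1, iteratedDerivWithin_eq_iteratedFDerivWithin, iteratedDeriv_eq_iteratedFDeriv,
    iteratedFDerivWithin_of_isOpen k hO hτ]

open Set

lemma rolle_iter (k : ℕ) :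
    ∀ (g : ℝ → ℝ) (O : Set ℝ), IsOpen O → O.OrdConnected → ContDiffOn ℝ k g O →
    ∀ z : Fin (k + 1) → ℝ, StrictMono z → (∀ i, z i ∈ O) → (∀ i, g (z i) = 0) →
    ∃ τ ∈ O, iteratedDeriv k g τ = 0 := by
  induction k with
  | zero =>
      intro g O _ _ _ z _ hzO hz0
      exact ⟨z 0, hzO 0, by simpa using hz0 0⟩
  | succ k ih =>
      intro g O hO hOc hg z hz hzO hz0
      have hc : ∀ i : Fin (k + 1), ∃ c ∈ Ioo (z i.castSucc) (z i.succ), deriv g c = 0 := by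
        intro i
        have hab : z i.castSucc < z i.succ := hz (Fin.castSucc_lt_succ (i := i))
        have hcont : ContinuousOn g (Icc (z i.castSucc) (z i.succ)) :=
          hg.continuousOn.mono (hOc.out (hzO _) (hzO _))
        exact exists_deriv_eq_zero hab hcont (by rw [hz0, hz0])
      choose c hc1 hc2 using hc
      have hcO : ∀ i, c i ∈ O := fun i =>
        hOc.out (hzO i.castSucc) (hzO i.succ) ⟨(hc1 i).1.le, (hc1 i).2.le⟩
      have hcm : StrictMono c := by
        intro i j hij
        calc c i < z i.succ := (hc1 i).2
          _ ≤ z j.castSucc := hz.monotone (by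
              rw [Fin.le_def, Fin.val_succ, Fin.coe_castSucc]; exact hij)
          _ < c j := (hc1 j).1
      have hg' : ContDiffOn ℝ k (deriv g) O :=
        hg.deriv_of_isOpen hO (by exact_mod_cast le_rfl)
      obtain ⟨τ, hτO, hτ⟩ := ih (deriv g) O hO hOc hg' c hcm hcO hc2
      exact ⟨τ, hτO, by rwa [iteratedDeriv_succ']⟩

open Polynomial Set Matrix Finset

lemma det_M_eq (n : ℕ) (f : ℝ → ℝ) (y : Fin (n + 1) → ℝ) (p : ℝ[X])
    (hnd : p.natDegree ≤ n) (hnode : ∀ i, p.eval (y i) = f (y i)) :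
    Matrix.det (Matrix.of fun i j : Fin (n + 1) =>
        if (j : ℕ) < n then y i ^ (j : ℕ) else f (y i)) =
      p.coeff n * ∏ i : Fin (n + 1), ∏ j ∈ Finset.Ioi i, (y j - y i) := by
  set E : Matrix (Fin (n+1)) (Fin (n+1)) ℝ := Matrix.of fun k j =>
    if (j : ℕ) < n then (if k = j then (1:ℝ) else 0) else p.coeff k with hE
  have hME : (Matrix.of fun i j : Fin (n + 1) =>
      if (j : ℕ) < n then y i ^ (j : ℕ) else f (y i)) = Matrix.vandermonde y * E := by
    ext i j
    rw [Matrix.mul_apply]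
    by_cases hj : (j : ℕ) < n
    · simp [hE, Matrix.vandermonde, hj, mul_ite]
    · have : f (y i) = p.eval (y i) := (hnode i).symm
      simp only [Matrix.of_apply, hj, if_false, hE, Matrix.vandermonde_apply]
      rw [this, Polynomial.eval_eq_sum_range' (Nat.lt_succ_of_le hnd),
        ← Fin.sum_univ_eq_sum_range]
      exact Finset.sum_congr rfl fun k _ => by ring
  have hEtri : E.BlockTriangular id := by
    intro i j hij
    have hj : (j : ℕ) < n := lt_of_lt_of_le hij (Nat.lt_succ_iff.mp i.isLt)
    simp [hE, hj, (ne_of_gt hij : i ≠ j)]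
  have hdetE : E.det = p.coeff n := by
    rw [Matrix.det_of_upperTriangular hEtri]
    rw [Fin.prod_univ_castSucc]
    have h1 : ∀ k : Fin n, E k.castSucc k.castSucc = 1 := fun k => by
      simp [hE, k.isLt]
    have h2 : E (Fin.last n) (Fin.last n) = p.coeff n := by
      simp [hE]
    simp [h1, h2]
  rw [hME, Matrix.det_mul, hdetE, Matrix.det_vandermonde]
  ring


lemma core (n : ℕ) (I : Set ℝ) (hI : I.OrdConnected) (f : ℝ → ℝ)
    (hf : ContDiffOn ℝ n f I) (y : Fin (n + 1) → ℝ) (hy : StrictMono y)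
    (hyI : ∀ i, y i ∈ I) :
    ∃ τ ∈ I,
      Matrix.det (Matrix.of fun i j : Fin (n + 1) =>
          if (j : ℕ) < n then y i ^ (j : ℕ) else f (y i)) =
        iteratedDerivWithin n f I τ / (n.factorial : ℝ) *
          ∏ i : Fin (n + 1), ∏ j ∈ Finset.Ioi i, (y j - y i) := by
  obtain _ | m := n
  · refine ⟨y 0, hyI 0, ?_⟩
    rw [Matrix.det_fin_one]
    simp [iteratedDerivWithin_zero]
  -- interpolating polynomial
  set p : ℝ[X] := Lagrange.interpolate Finset.univ y (fun i => f (y i)) with hp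
  have hyinj : Set.InjOn y ↑(Finset.univ : Finset (Fin (m + 2))) := fun a _ b _ h =>
    hy.injective h
  have hdeg : p.degree < (m + 2 : ℕ) := by
    have h := Lagrange.degree_interpolate_lt (fun i => f (y i)) hyinj
    rw [Finset.card_univ, Fintype.card_fin] at h
    exact h
  have hnd : p.natDegree ≤ m + 1 := by
    by_cases hp0 : p = 0
    · simp [hp0]
    · exact Nat.lt_succ_iff.mp ((Polynomial.natDegree_lt_iff_degree_lt hp0).mpr (by
        exact_mod_cast hdeg))
  have hnode : ∀ i, p.eval (y i) = f (y i) := fun i =>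
    Lagrange.eval_interpolate_at_node (fun i => f (y i)) hyinj (Finset.mem_univ i)
  -- the function g
  set g : ℝ → ℝ := f - fun t => p.eval t with hg
  have hpC : ContDiff ℝ (m + 1 : ℕ) fun t : ℝ => p.eval t := (polyEval_contDiff p).of_le (mod_cast le_top)
  have hgC : ContDiffOn ℝ (m + 1 : ℕ) g I := hf.sub hpC.contDiffOn
  have hgz : ∀ i, g (y i) = 0 := fun i => by simp [hg, hnode i]
  -- the open interval O
  set O : Set ℝ := Ioo (y 0) (y (Fin.last (m + 1))) with hO
  have hOI : O ⊆ I := Set.Ioo_subset_Icc_self.trans (hI.out (hyI 0) (hyI _))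
  -- first Rolle step
  have hc : ∀ i : Fin (m + 1), ∃ c ∈ Ioo (y i.castSucc) (y i.succ), deriv g c = 0 := by
    intro i
    have hab : y i.castSucc < y i.succ := hy (Fin.castSucc_lt_succ (i := i))
    have hcont : ContinuousOn g (Icc (y i.castSucc) (y i.succ)) :=
      hgC.continuousOn.mono (hI.out (hyI _) (hyI _))
    exact exists_deriv_eq_zero hab hcont (by rw [hgz, hgz])
  choose c hc1 hc2 using hc
  have hcO : ∀ i, c i ∈ O := by
    intro i
    exact ⟨lt_of_le_of_lt (hy.monotone (Fin.zero_le _)) (hc1 i).1,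
      lt_of_lt_of_le (hc1 i).2 (hy.monotone (Fin.le_last _))⟩
  have hcm : StrictMono c := by
    intro i j hij
    calc c i < y i.succ := (hc1 i).2
      _ ≤ y j.castSucc := hy.monotone (by
          rw [Fin.le_def, Fin.val_succ, Fin.coe_castSucc]; exact hij)
      _ < c j := (hc1 j).1
  have hdg : ContDiffOn ℝ m (deriv g) O :=
    (hgC.mono hOI).deriv_of_isOpen isOpen_Ioo (by exact_mod_cast le_rfl)
  obtain ⟨τ, hτO, hτ0⟩ := rolle_iter m (deriv g) O isOpen_Ioo Set.ordConnected_Ioo hdg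
    c hcm hcO hc2
  rw [← iteratedDeriv_succ'] at hτ0
  refine ⟨τ, hOI hτO, ?_⟩
  -- compute iterated derivatives at τ
  have hiw : iteratedDerivWithin (m + 1) f I τ = iteratedDeriv (m + 1) f τ :=
    iterWithin_eq_iter (m + 1) f isOpen_Ioo hOI hτO
  have hsplit : iteratedDeriv (m + 1) g τ =
      iteratedDeriv (m + 1) f τ - iteratedDeriv (m + 1) (fun t => p.eval t) τ := by
    have h1 : iteratedDerivWithin (m + 1) g O τ =
        iteratedDerivWithin (m + 1) f O τ -
          iteratedDerivWithin (m + 1) (fun t => p.eval t) O τ :=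
      iteratedDerivWithin_sub hτO isOpen_Ioo.uniqueDiffOn (hf.mono hOI τ hτO) (hpC.contDiffOn τ hτO)
    have e := fun h : ℝ → ℝ => iterWithin_eq_iter (m + 1) h isOpen_Ioo (subset_refl O) hτO
    rw [e, e, e] at h1
    exact h1
  have hq : (derivative^[m + 1] p).natDegree = 0 :=
    Nat.le_antisymm ((p.natDegree_iterate_derivative (m + 1)).trans (by omega)) (Nat.zero_le _)
  have hqc : (derivative^[m + 1] p).coeff 0 = ((m + 1).factorial) • p.coeff (m + 1) := by
    rw [Polynomial.coeff_iterate_derivative, Nat.zero_add, Nat.descFactorial_self]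
  have hqC : derivative^[m + 1] p = Polynomial.C (((m + 1).factorial : ℝ) * p.coeff (m + 1)) := by
    rw [Polynomial.eq_C_of_natDegree_le_zero hq.le, hqc, nsmul_eq_mul]
  have hpgoal : iteratedDeriv (m + 1) (fun t => p.eval t) τ =
      ((m + 1).factorial : ℝ) * p.coeff (m + 1) := by
    rw [iteratedDeriv_polyEval]
    simp [hqC]
  have hcoeff : p.coeff (m + 1) =
      iteratedDerivWithin (m + 1) f I τ / ((m + 1).factorial : ℝ) := by
    rw [hiw]
    have h0 : iteratedDeriv (m + 1) f τ - ((m + 1).factorial : ℝ) * p.coeff (m + 1) = 0 := by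
      rw [← hpgoal, ← hsplit, hτ0]
    have hfac : ((m + 1).factorial : ℝ) ≠ 0 := Nat.cast_ne_zero.mpr (m + 1).factorial_ne_zero
    field_simp
    linarith
  rw [det_M_eq (m + 1) f y p hnd hnode, hcoeff]

/-- Schwarz mean value theorem: for `f` of class `C^n` on an interval `I` and points
`x₀, …, xₙ ∈ I`, the determinant of the matrix with rows `(1, xᵢ, …, xᵢ^{n-1}, f(xᵢ))`
equals `f⁽ⁿ⁾(τ)/n! · V(x₀, …, xₙ)` for some `τ ∈ I`. -/
theorem schwarz_mvt (n : ℕ) (I : Set ℝ) (hI : I.OrdConnected) (f : ℝ → ℝ)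
    (hf : ContDiffOn ℝ n f I) (x : Fin (n + 1) → ℝ) (hx : ∀ i, x i ∈ I) :
    ∃ τ ∈ I,
      Matrix.det (Matrix.of fun i j : Fin (n + 1) =>
          if (j : ℕ) < n then x i ^ (j : ℕ) else f (x i)) =
        iteratedDerivWithin n f I τ / (n.factorial : ℝ) *
          ∏ i : Fin (n + 1), ∏ j ∈ Finset.Ioi i, (x j - x i) := by
  by_cases hinj : Function.Injective x
  · set σ := Tuple.sort x with hσ
    have hsm : StrictMono (x ∘ σ) :=
      (Tuple.monotone_sort x).strictMono_of_injective (hinj.comp σ.injective)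
    obtain ⟨τ, hτI, key⟩ := core n I hI f hf (x ∘ σ) hsm (fun i => hx _)
    refine ⟨τ, hτI, ?_⟩
    set Mx : Matrix (Fin (n + 1)) (Fin (n + 1)) ℝ :=
      Matrix.of fun i j => if (j : ℕ) < n then x i ^ (j : ℕ) else f (x i) with hMx
    set s : ℝ := ((Equiv.Perm.sign σ : ℤ) : ℝ) with hs
    have hs2 : s * s = 1 := by
      rcases Int.units_eq_one_or σ.sign with h | h <;> simp [hs, h]
    have hsub : (Matrix.of fun i j : Fin (n + 1) =>
        if (j : ℕ) < n then (x ∘ σ) i ^ (j : ℕ) else f ((x ∘ σ) i)) = Mx.submatrix σ id := by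
      ext i j
      simp [hMx, Matrix.submatrix]
    have hvand : Matrix.vandermonde (x ∘ σ) = (Matrix.vandermonde x).submatrix σ id := by
      ext i j
      simp [Matrix.vandermonde]
    have hV : ∏ i : Fin (n + 1), ∏ j ∈ Finset.Ioi i, ((x ∘ σ) j - (x ∘ σ) i) =
        s * ∏ i : Fin (n + 1), ∏ j ∈ Finset.Ioi i, (x j - x i) := by
      rw [← Matrix.det_vandermonde, ← Matrix.det_vandermonde, hvand, Matrix.det_permute, hs]
    rw [hsub, hV, Matrix.det_permute] at key
    have key' : s * Mx.det =
        iteratedDerivWithin n f I τ / (n.factorial : ℝ) *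
          (s * ∏ i : Fin (n + 1), ∏ j ∈ Finset.Ioi i, (x j - x i)) := by
      rw [← key, hs]
    calc Mx.det = s * (s * Mx.det) := by rw [← mul_assoc, hs2, one_mul]
      _ = s * (iteratedDerivWithin n f I τ / (n.factorial : ℝ) *
          (s * ∏ i : Fin (n + 1), ∏ j ∈ Finset.Ioi i, (x j - x i))) := by rw [key']
      _ = (s * s) * (iteratedDerivWithin n f I τ / (n.factorial : ℝ) *
          ∏ i : Fin (n + 1), ∏ j ∈ Finset.Ioi i, (x j - x i)) := by ring
      _ = _ := by rw [hs2, one_mul]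
  · obtain ⟨a, b, hab, hne⟩ := Function.not_injective_iff.mp hinj
    refine ⟨x 0, hx 0, ?_⟩
    have hdet0 : Matrix.det (Matrix.of fun i j : Fin (n + 1) =>
        if (j : ℕ) < n then x i ^ (j : ℕ) else f (x i)) = 0 :=
      Matrix.det_zero_of_row_eq hne (funext fun k => by simp [hab])
    have hV0 : (∏ i : Fin (n + 1), ∏ j ∈ Finset.Ioi i, (x j - x i)) = 0 := by
      rcases hne.lt_or_gt with h | h
      · exact Finset.prod_eq_zero (Finset.mem_univ a)
          (Finset.prod_eq_zero (Finset.mem_Ioi.mpr h) (by rw [hab, sub_self]))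
      · exact Finset.prod_eq_zero (Finset.mem_univ b)
          (Finset.prod_eq_zero (Finset.mem_Ioi.mpr h) (by rw [hab, sub_self]))
    rw [hdet0, hV0, mul_zero]
end

section
/- (Generalized Schwarz mean value theorem) Let I be a real interval, let f₀, …, fₙ : I → ℝ be n times continuously differentiable on I, and let x₀, …, xₙ ∈ I. Then there exist points τ_{ij} ∈ I for 0 ≤ i, j ≤ n such that det[f_i(x_j)]_{0 ≤ i,j ≤ n} = det[f_i^{(j)}(τ_{ij})/j!]_{0 ≤ i,j ≤ n} · V(x₀, …, xₙ). -/
/-!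
Newton's interpolation formula `f (xⱼ) = ∑ₖ f[x₀, …, xₖ] · ∏_{l < k} (xⱼ - xₗ)` factors
`[fᵢ(xⱼ)]` as the matrix of divided differences `[fᵢ[x₀, …, xₖ]]` times an upper triangular
matrix whose diagonal product is the Vandermonde product. For distinct nodes, applying Rolle's
theorem `k` times to `f` minus its interpolation polynomial at `x₀, …, xₖ` gives
`f[x₀, …, xₖ] = f⁽ᵏ⁾(ξ) / k!`. If two nodes coincide, both sides vanish.
-/

open Finset Polynomial Function Matrix
open scoped Nat Topology

theorem Polynomial.iterate_derivative_of_natDegree_le {R : Type*} [Semiring R] {p : R[X]} {k : ℕ}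
    (hp : p.natDegree ≤ k) : derivative^[k] p = C (k ! * p.coeff k) := by
  have hdeg : (derivative^[k] p).natDegree ≤ 0 := by
    have := natDegree_iterate_derivative p k
    omega
  rw [eq_C_of_natDegree_le_zero hdeg, coeff_iterate_derivative, zero_add, Nat.descFactorial_self,
    nsmul_eq_mul]

section DividedDifferences

variable {K : Type*} [Field K] (a : ℕ → K)

/-- `divDiffAt a f k t` is the divided difference `f[a 0, …, a (k - 1), t]`. -/
def divDiffAt (f : K → K) : ℕ → K → K
  | 0 => f
  | k + 1 => fun t => (divDiffAt f k t - divDiffAt f k (a k)) / (t - a k)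

def divDiff (f : K → K) (k : ℕ) : K := divDiffAt a f k (a k)

noncomputable def newtonBasis (k : ℕ) : K[X] := ∏ l ∈ range k, (X - C (a l))

noncomputable def newtonPoly (f : K → K) (m : ℕ) : K[X] :=
  ∑ k ∈ range m, C (divDiff a f k) * newtonBasis a k

theorem eval_newtonBasis (k : ℕ) (t : K) :
    (newtonBasis a k).eval t = ∏ l ∈ range k, (t - a l) := by
  simp [newtonBasis, eval_prod]

theorem eval_newtonBasis_of_lt {j k : ℕ} (h : j < k) : (newtonBasis a k).eval (a j) = 0 := by
  rw [eval_newtonBasis]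
  exact prod_eq_zero (mem_range.2 h) (sub_self _)

theorem monic_newtonBasis (k : ℕ) : (newtonBasis a k).Monic :=
  monic_prod_of_monic _ _ fun l _ => monic_X_sub_C (a l)

theorem natDegree_newtonBasis (k : ℕ) : (newtonBasis a k).natDegree = k := by
  rw [newtonBasis, natDegree_prod_of_monic _ _ fun l _ => monic_X_sub_C (a l)]
  simp

theorem eval_newtonPoly (f : K → K) (m : ℕ) (t : K) :
    (newtonPoly a f m).eval t = ∑ k ∈ range m, divDiff a f k * (newtonBasis a k).eval t := by
  simp [newtonPoly, eval_finsetSum]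

theorem eq_eval_newtonPoly_add_mul_divDiffAt (f : K → K) {m : ℕ} {t : K}
    (ht : ∀ l < m, t ≠ a l) :
    f t = (newtonPoly a f m).eval t + (newtonBasis a m).eval t * divDiffAt a f m t := by
  induction m with
  | zero => simp [newtonPoly, newtonBasis, divDiffAt]
  | succ m ih =>
    have hsub : t - a m ≠ 0 := sub_ne_zero.2 (ht m m.lt_succ_self)
    have hstep : divDiffAt a f m t = divDiff a f m + (t - a m) * divDiffAt a f (m + 1) t := by
      rw [divDiffAt, divDiff]
      field_simp
      ring
    rw [ih fun l hl => ht l (hl.trans m.lt_succ_self), hstep, eval_newtonPoly, eval_newtonPoly,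
      sum_range_succ, eval_newtonBasis, eval_newtonBasis, prod_range_succ]
    ring

theorem eval_newtonPoly_of_lt (f : K → K) {j m : ℕ} (hjm : j < m)
    (ha : Set.InjOn a (Set.Iio m)) :
    (newtonPoly a f m).eval (a j) = f (a j) := by
  have hne : ∀ l < j, a j ≠ a l := fun l hl h => hl.ne' (ha hjm (hl.trans hjm) h)
  have htail : ∀ k ∈ range m, k ∉ range (j + 1) →
      divDiff a f k * (newtonBasis a k).eval (a j) = 0 := fun k _ hk => by
    rw [eval_newtonBasis_of_lt a (by simpa using hk), mul_zero]
  rw [eval_newtonPoly, ← sum_subset (range_subset_range.2 hjm) htail, sum_range_succ,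
    eq_eval_newtonPoly_add_mul_divDiffAt a f hne, eval_newtonPoly]
  exact congrArg _ (mul_comm _ _)

theorem natDegree_newtonPoly_succ_le (f : K → K) (k : ℕ) :
    (newtonPoly a f (k + 1)).natDegree ≤ k :=
  natDegree_sum_le_of_forall_le _ _ fun m hm =>
    (natDegree_C_mul_le _ _).trans ((natDegree_newtonBasis a m).trans_le (mem_range_succ_iff.1 hm))

theorem coeff_newtonPoly_succ (f : K → K) (k : ℕ) :
    (newtonPoly a f (k + 1)).coeff k = divDiff a f k := by
  have hlow : ∀ m ∈ range k, (C (divDiff a f m) * newtonBasis a m).coeff k = 0 := fun m hm =>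
    coeff_eq_zero_of_natDegree_lt <|
      (natDegree_C_mul_le _ _).trans_lt ((natDegree_newtonBasis a m).trans_lt (mem_range.1 hm))
  have hlead : (newtonBasis a k).coeff k = 1 := by
    simpa only [natDegree_newtonBasis] using (monic_newtonBasis a k).coeff_natDegree
  rw [newtonPoly, finsetSum_coeff, sum_range_succ, sum_eq_zero hlow, coeff_C_mul, hlead,
    zero_add, mul_one]

theorem iterate_derivative_newtonPoly_succ (f : K → K) (k : ℕ) :
    derivative^[k] (newtonPoly a f (k + 1)) = C (k ! * divDiff a f k) := by
  rw [iterate_derivative_of_natDegree_le (natDegree_newtonPoly_succ_le a f k),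
    coeff_newtonPoly_succ]

theorem det_of_apply_eq_det_of_divDiff_mul_prod {n : ℕ} (ha : Set.InjOn a (Set.Iio (n + 1)))
    (f : Fin (n + 1) → K → K) :
    det (of fun i j : Fin (n + 1) => f i (a j)) =
      det (of fun i k : Fin (n + 1) => divDiff a (f i) k) *
        ∏ i : Fin (n + 1), ∏ j ∈ Ioi i, (a j - a i) := by
  set N : Matrix (Fin (n + 1)) (Fin (n + 1)) K := of fun k j => (newtonBasis a k).eval (a j)
  have hfactor : of (fun i j : Fin (n + 1) => f i (a j)) =
      of (fun i k : Fin (n + 1) => divDiff a (f i) k) * N := by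
    ext i j
    rw [mul_apply, of_apply, ← eval_newtonPoly_of_lt a (f i) j.is_lt ha, eval_newtonPoly,
      ← Fin.sum_univ_eq_sum_range (fun k => divDiff a (f i) k * (newtonBasis a k).eval (a j))]
    rfl
  have hN : N.det = ∏ k : Fin (n + 1), ∏ j ∈ Iio k, (a k - a j) := by
    have htri : N.IsUpperTriangular := fun k j (hjk : j < k) => eval_newtonBasis_of_lt a hjk
    rw [det_of_isUpperTriangular htri]
    refine prod_congr rfl fun k _ => ?_
    rw [show N k k = (newtonBasis a k).eval (a k) from rfl, eval_newtonBasis, ← Nat.Iio_eq_range,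
      ← Fin.map_valEmbedding_Iio, prod_map]
    rfl
  rw [hfactor, det_mul, hN]
  congr 1
  exact prod_comm' fun k j => by simp only [mem_univ, mem_Iio, mem_Ioi, true_and, and_true]

end DividedDifferences

section Real

open Set

theorem Set.OrdConnected.uniqueDiffOn {I : Set ℝ} (hI : I.OrdConnected) {x y : ℝ} (hx : x ∈ I)
    (hy : y ∈ I) (hxy : x ≠ y) : UniqueDiffOn ℝ I := by
  have hsub : Ioo (min x y) (max x y) ⊆ interior I :=
    interior_maximal (Ioo_subset_Icc_self.trans (hI.uIcc_subset hx hy)) isOpen_Ioo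
  exact uniqueDiffOn_convex hI.convex ((nonempty_Ioo.2 (min_lt_max.2 hxy)).mono hsub)

theorem ContDiffOn.hasDerivAt_iteratedDerivWithin {𝕜 F : Type*} [NontriviallyNormedField 𝕜]
    [NormedAddCommGroup F] [NormedSpace 𝕜 F] {f : 𝕜 → F} {s : Set 𝕜} {n : WithTop ℕ∞} {m : ℕ}
    {t : 𝕜} (hf : ContDiffOn 𝕜 n f s) (hm : m < n) (hs : UniqueDiffOn 𝕜 s) (ht : s ∈ 𝓝 t) :
    HasDerivAt (iteratedDerivWithin m f s) (iteratedDerivWithin (m + 1) f s t) t := by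
  rw [iteratedDerivWithin_succ, derivWithin_of_mem_nhds ht]
  exact ((hf.differentiableOn_iteratedDerivWithin hm hs t (mem_of_mem_nhds ht)).differentiableAt
    ht).hasDerivAt

theorem exists_eq_zero_of_hasDerivAt_succ {I : Set ℝ} (hI : I.OrdConnected) {k : ℕ}
    {H : ℕ → ℝ → ℝ} (hc : ∀ m < k, ContinuousOn (H m) I)
    (hd : ∀ m < k, ∀ t ∈ interior I, HasDerivAt (H m) (H (m + 1) t) t)
    {y : Fin (k + 1) → ℝ} (hy : Injective y) (hyI : ∀ j, y j ∈ I) (h0 : ∀ j, H 0 (y j) = 0) :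
    ∃ ξ ∈ I, H k ξ = 0 := by
  induction k generalizing H with
  | zero => exact ⟨y 0, hyI 0, h0 0⟩
  | succ k ih =>
    set s := y ∘ Tuple.sort y
    have hs : StrictMono s :=
      (Tuple.monotone_sort y).strictMono_of_injective (hy.comp (Tuple.sort y).injective)
    have hrolle : ∀ j : Fin (k + 1), ∃ z ∈ Ioo (s j.castSucc) (s j.succ), H 1 z = 0 := fun j => by
      have hIcc : Icc (s j.castSucc) (s j.succ) ⊆ I := hI.out (hyI _) (hyI _)
      exact exists_hasDerivAt_eq_zero (hs Fin.castSucc_lt_succ) ((hc 0 k.succ_pos).mono hIcc)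
        ((h0 _).trans (h0 _).symm) fun t ht =>
          hd 0 k.succ_pos t (interior_maximal (Ioo_subset_Icc_self.trans hIcc) isOpen_Ioo ht)
    choose z hz hz0 using hrolle
    have hzI : ∀ j, z j ∈ I := fun j => hI.out (hyI _) (hyI _) (Ioo_subset_Icc_self (hz j))
    have hzmono : StrictMono z := Fin.strictMono_iff_lt_succ.2 fun j =>
      calc z j.castSucc < s j.castSucc.succ := (hz j.castSucc).2
        _ = s j.succ.castSucc := by rw [Fin.succ_castSucc]
        _ < z j.succ := (hz j.succ).1
    exact ih (H := fun m => H (m + 1)) (fun m hm => hc (m + 1) (by omega))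
      (fun m hm => hd (m + 1) (by omega)) hzmono.injective hzI hz0

theorem exists_iteratedDerivWithin_div_factorial_eq_divDiff {I : Set ℝ} (hI : I.OrdConnected)
    {f : ℝ → ℝ} {k : ℕ} (hf : ContDiffOn ℝ k f I) {a : ℕ → ℝ} (haI : ∀ m ≤ k, a m ∈ I)
    (ha : InjOn a (Set.Iio (k + 1))) :
    ∃ ξ ∈ I, iteratedDerivWithin k f I ξ / k ! = divDiff a f k := by
  rcases k.eq_zero_or_pos with rfl | hk
  · exact ⟨a 0, haI 0 le_rfl, by simp [divDiff, divDiffAt]⟩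
  have hud : UniqueDiffOn ℝ I := hI.uniqueDiffOn (haI 0 (Nat.zero_le k)) (haI k le_rfl)
    fun h => hk.ne (ha (Nat.succ_pos k) k.lt_succ_self h)
  set P := newtonPoly a f (k + 1)
  -- Rolle applies to the interpolation error `f - P` and its derivatives.
  obtain ⟨ξ, hξI, hξ⟩ := exists_eq_zero_of_hasDerivAt_succ hI
    (H := fun m t => iteratedDerivWithin m f I t - (derivative^[m] P).eval t)
    (fun m hm => (hf.continuousOn_iteratedDerivWithin (by exact_mod_cast hm.le) hud).sub
      (derivative^[m] P).continuousOn)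
    (fun m hm t ht => (hf.hasDerivAt_iteratedDerivWithin (by exact_mod_cast hm) hud
      (mem_interior_iff_mem_nhds.1 ht)).sub
        (by simpa only [iterate_succ_apply'] using (derivative^[m] P).hasDerivAt t))
    (y := fun j : Fin (k + 1) => a j) (fun i j h => Fin.ext (ha i.is_lt j.is_lt h))
    (fun j => haI j j.is_le)
    (fun j => by simp [P, eval_newtonPoly_of_lt a f j.is_lt ha])
  refine ⟨ξ, hξI, ?_⟩
  rw [iterate_derivative_newtonPoly_succ, eval_C, sub_eq_zero] at hξ
  rw [hξ]
  field_simp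

end Real

/-- Generalized Schwarz mean value theorem: for `f₀, …, fₙ` of class `C^n` on an
interval `I` and points `x₀, …, xₙ ∈ I`, there exist `τᵢⱼ ∈ I` with
`det[fᵢ(xⱼ)] = det[fᵢ⁽ʲ⁾(τᵢⱼ)/j!] · V(x₀, …, xₙ)`. -/
theorem generalized_schwarz_mvt (n : ℕ) (I : Set ℝ) (hI : I.OrdConnected)
    (f : Fin (n + 1) → ℝ → ℝ) (hf : ∀ i, ContDiffOn ℝ n (f i) I)
    (x : Fin (n + 1) → ℝ) (hx : ∀ i, x i ∈ I) :
    ∃ τ : Fin (n + 1) → Fin (n + 1) → ℝ, (∀ i j, τ i j ∈ I) ∧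
      Matrix.det (Matrix.of fun i j : Fin (n + 1) => f i (x j)) =
        Matrix.det (Matrix.of fun i j : Fin (n + 1) =>
            iteratedDerivWithin (j : ℕ) (f i) I (τ i j) / ((j : ℕ).factorial : ℝ)) *
          ∏ i : Fin (n + 1), ∏ j ∈ Finset.Ioi i, (x j - x i) := by
  by_cases hinj : Injective x
  · obtain ⟨a, hax⟩ : ∃ a : ℕ → ℝ, ∀ j : Fin (n + 1), a j = x j :=
      ⟨fun m => x (Fin.clamp m n), fun j => congrArg x (Fin.ext (min_eq_left j.is_le))⟩
    have ha : Set.InjOn a (Set.Iio (n + 1)) := fun p hp q hq h =>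
      Fin.mk.inj (hinj ((hax ⟨p, hp⟩).symm.trans (h.trans (hax ⟨q, hq⟩))))
    have hmvt : ∀ i j : Fin (n + 1), ∃ ξ ∈ I,
        iteratedDerivWithin j (f i) I ξ / (j : ℕ)! = divDiff a (f i) j := fun i j =>
      exists_iteratedDerivWithin_div_factorial_eq_divDiff hI
        ((hf i).of_le (by exact_mod_cast j.is_le))
        (fun m hm => hax ⟨m, hm.trans_lt j.is_lt⟩ ▸ hx _)
        (ha.mono (Set.Iio_subset_Iio j.is_lt))
    choose τ hτI hτ using hmvt
    refine ⟨τ, hτI, ?_⟩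
    simp only [← hax, hτ]
    exact det_of_apply_eq_det_of_divDiff_mul_prod a ha f
  · obtain ⟨p, q, hpq, hne⟩ := not_injective_iff.1 hinj
    refine ⟨fun _ _ => x 0, fun _ _ => hx 0, ?_⟩
    rw [← det_vandermonde, det_vandermonde_eq_zero_iff.2 ⟨p, q, hpq, hne⟩, mul_zero]
    exact det_zero_of_column_eq hne fun i => by simp [hpq]
end

section
/- Let I be a compact real interval and let f₀, …, fₙ : I → ℝ be n times continuously differentiable on I. Then there exists a constant c > 0, depending only on f₀, …, fₙ and I, such that for all x₀, …, xₙ ∈ I one has |det[f_i(x_j)]_{0 ≤ i,j ≤ n}| ≤ c · |V(x₀, …, xₙ)|. -/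
/-!
Expanding the determinant along its first column writes it as `φ x₀`, where
`φ = ∑ᵢ ±(minor i) • fᵢ` is `Cⁿ` and vanishes at `x₁, …, xₙ`. The interpolation error bound
`|φ t| ≤ sup |φ⁽ⁿ⁾| / n! * ∏ⱼ |t - xⱼ|`, a consequence of the generalized Rolle theorem, together
with the bound on the minors given by induction on `n`, yields the claim, since
`V(x₀, …, xₙ) = ∏ⱼ (xⱼ - x₀) * V(x₁, …, xₙ)`. Tuples with a repeated entry are trivial: both
determinants vanish.
-/

open Set Polynomial

theorem Polynomial.iteratedDeriv_eval {𝕜 : Type*} [NontriviallyNormedField 𝕜] (p : 𝕜[X])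
    (k : ℕ) : iteratedDeriv k (fun t => p.eval t) = fun t => (derivative^[k] p).eval t := by
  induction k generalizing p with
  | zero => simp
  | succ k ih =>
    have hd : deriv (fun t => p.eval t) = fun t => p.derivative.eval t :=
      _root_.funext fun _ => p.deriv
    rw [iteratedDeriv_succ', hd, ih, Function.iterate_succ_apply]

theorem Polynomial.iteratedDerivWithin_eval {𝕜 : Type*} [NontriviallyNormedField 𝕜]
    (p : 𝕜[X]) (k : ℕ) {s : Set 𝕜} (hs : UniqueDiffOn 𝕜 s) {x : 𝕜} (hx : x ∈ s) :
    iteratedDerivWithin k (fun t => p.eval t) s x = (derivative^[k] p).eval x := by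
  have hp : ContDiffAt 𝕜 k (fun t => p.eval t) x := by
    simpa using (p.contDiff_aeval (𝕜 := 𝕜) k).contDiffAt (x := x)
  rw [iteratedDerivWithin_eq_iteratedDeriv hs hp hx, p.iteratedDeriv_eval]

theorem Polynomial.Monic.iterate_derivative_natDegree {R : Type*} [CommSemiring R] {p : R[X]}
    (hp : p.Monic) : derivative^[p.natDegree] p = C (p.natDegree.factorial : R) := by
  rw [eq_C_of_natDegree_eq_zero (p := derivative^[p.natDegree] p)
      (by simpa using natDegree_iterate_derivative p p.natDegree),
    coeff_iterate_derivative, zero_add, Nat.descFactorial_self, hp.coeff_natDegree, nsmul_one]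

theorem exists_iteratedDerivWithin_eq_zero_of_strictMono {n : ℕ} {a b : ℝ} {φ : ℝ → ℝ}
    (hφ : ContDiffOn ℝ n φ (Icc a b)) {x : Fin (n + 1) → ℝ} (hx : StrictMono x)
    (hxI : ∀ j, x j ∈ Icc a b) (hφx : ∀ j, φ (x j) = 0) :
    ∃ ξ ∈ Icc a b, iteratedDerivWithin n φ (Icc a b) ξ = 0 := by
  induction n generalizing φ with
  | zero => exact ⟨x 0, hxI 0, by simpa using hφx 0⟩
  | succ n ih =>
    have hab : a < b := (hxI 0).1.trans_lt ((hx Fin.zero_lt_one).trans_le (hxI 1).2)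
    have hrolle (j : Fin (n + 1)) :
        ∃ ξ ∈ Ioo (x j.castSucc) (x j.succ), derivWithin φ (Icc a b) ξ = 0 := by
      have hsub : Icc (x j.castSucc) (x j.succ) ⊆ Icc a b :=
        Icc_subset_Icc (hxI _).1 (hxI _).2
      obtain ⟨ξ, hξ, hd⟩ := exists_deriv_eq_zero (hx j.castSucc_lt_succ)
        (hφ.continuousOn.mono hsub) ((hφx _).trans (hφx _).symm)
      refine ⟨ξ, hξ, ?_⟩
      rwa [derivWithin_of_mem_nhds
        (Icc_mem_nhds ((hxI _).1.trans_lt hξ.1) (hξ.2.trans_le (hxI _).2))]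
    choose ξ hξ hξ0 using hrolle
    have hξmono : StrictMono ξ := Fin.strictMono_iff_lt_succ.2 fun j =>
      (hξ j.castSucc).2.trans (by simpa only [Fin.succ_castSucc] using (hξ j.succ).1)
    obtain ⟨η, hη, h⟩ := ih (hφ.derivWithin (uniqueDiffOn_Icc hab) le_rfl) hξmono
      (fun j => Icc_subset_Icc (hxI _).1 (hxI _).2 (Ioo_subset_Icc_self (hξ j))) hξ0
    exact ⟨η, hη, by rwa [iteratedDerivWithin_succ']⟩

theorem exists_iteratedDerivWithin_eq_zero_of_card_eq {n : ℕ} {a b : ℝ} {φ : ℝ → ℝ}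
    (hφ : ContDiffOn ℝ n φ (Icc a b)) {s : Finset ℝ} (hs : s.card = n + 1)
    (hsI : ↑s ⊆ Icc a b) (hφs : ∀ t ∈ s, φ t = 0) :
    ∃ ξ ∈ Icc a b, iteratedDerivWithin n φ (Icc a b) ξ = 0 :=
  exists_iteratedDerivWithin_eq_zero_of_strictMono hφ (s.orderEmbOfFin hs).strictMono
    (fun j => hsI (s.orderEmbOfFin_mem hs j)) (fun j => hφs _ (s.orderEmbOfFin_mem hs j))

theorem abs_le_of_zeros_of_abs_iteratedDerivWithin_le {n : ℕ} {a b K : ℝ} (hab : a < b)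
    {φ : ℝ → ℝ} (hφ : ContDiffOn ℝ n φ (Icc a b))
    (hK : ∀ ξ ∈ Icc a b, |iteratedDerivWithin n φ (Icc a b) ξ| ≤ K)
    {s : Finset ℝ} (hs : s.card = n) (hsI : ↑s ⊆ Icc a b) (hφs : ∀ y ∈ s, φ y = 0)
    {t : ℝ} (ht : t ∈ Icc a b) :
    |φ t| ≤ K / n.factorial * ∏ y ∈ s, |t - y| := by
  by_cases hts : t ∈ s
  · rw [hφs t hts, abs_zero, Finset.prod_eq_zero hts (by simp), mul_zero]
  set P : ℝ[X] := Lagrange.nodal s id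
  have hPt : P.eval t ≠ 0 := by
    rw [Lagrange.eval_nodal]
    exact Finset.prod_ne_zero_iff.2 fun y hy => sub_ne_zero.2 (ne_of_mem_of_not_mem hy hts).symm
  have hP : ContDiffOn ℝ n (fun u => P.eval u) (Icc a b) := by
    simpa using (P.contDiff_aeval (𝕜 := ℝ) n).contDiffOn
  have hPn : derivative^[n] P = C (n.factorial : ℝ) := by
    rw [← hs, ← Lagrange.natDegree_nodal (v := id)]
    exact Lagrange.nodal_monic.iterate_derivative_natDegree
  -- `φ - c • P` vanishes on `insert t s`, so its `n`-th derivative `φ⁽ⁿ⁾ - c * n!` has a zero.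
  set c := φ t / P.eval t
  obtain ⟨ξ, hξ, hξ0⟩ := exists_iteratedDerivWithin_eq_zero_of_card_eq
    (φ := φ - c • fun u => P.eval u) (hφ.sub (hP.const_smul c))
    (s := insert t s) (by rw [Finset.card_insert_of_notMem hts, hs])
    (by rw [Finset.coe_insert]; exact insert_subset ht hsI) (by
      intro u hu
      rcases Finset.mem_insert.1 hu with rfl | hu
      · simp [c, div_mul_cancel₀ _ hPt]
      · simp [hφs u hu, P, Lagrange.eval_nodal, Finset.prod_eq_zero hu])
  have hcξ : c * n.factorial = iteratedDerivWithin n φ (Icc a b) ξ := by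
    rw [iteratedDerivWithin_sub (f := φ) (g := c • fun u => P.eval u) hξ (uniqueDiffOn_Icc hab)
      (hφ ξ hξ) ((hP.const_smul c) ξ hξ), iteratedDerivWithin_const_smul_field,
      P.iteratedDerivWithin_eval _ (uniqueDiffOn_Icc hab) hξ, hPn, eval_C, smul_eq_mul,
      sub_eq_zero] at hξ0
    exact hξ0.symm
  calc |φ t| = |c| * |P.eval t| := by rw [← abs_mul, div_mul_cancel₀ _ hPt]
    _ = |iteratedDerivWithin n φ (Icc a b) ξ| / n.factorial * ∏ y ∈ s, |t - y| := by
      rw [← hcξ, abs_mul, Nat.abs_cast, Lagrange.eval_nodal, Finset.abs_prod,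
        mul_div_cancel_right₀ _ (by positivity)]
      rfl
    _ ≤ K / n.factorial * ∏ y ∈ s, |t - y| := by gcongr; exact hK ξ hξ

theorem ContDiffOn.exists_pos_bound_iteratedDerivWithin_Icc {n : ℕ} {a b : ℝ} {f : ℝ → ℝ}
    (hf : ContDiffOn ℝ n f (Icc a b)) :
    ∃ M, 0 < M ∧ ∀ t ∈ Icc a b, |iteratedDerivWithin n f (Icc a b) t| ≤ M := by
  obtain ⟨M, hM⟩ : ∃ M, ∀ t ∈ Icc a b, |iteratedDerivWithin n f (Icc a b) t| ≤ M := by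
    rcases lt_or_ge a b with hab | hba
    · exact isCompact_Icc.exists_bound_of_continuousOn
        (hf.continuousOn_iteratedDerivWithin le_rfl (uniqueDiffOn_Icc hab))
    · refine ⟨|iteratedDerivWithin n f (Icc a b) a|, fun t ht => ?_⟩
      rw [le_antisymm (ht.2.trans hba) ht.1]
  exact ⟨max M 1, by positivity, fun t ht => (hM t ht).trans (le_max_left _ _)⟩

theorem Matrix.det_of_apply_cons {R α : Type*} [CommRing R] {n : ℕ} (f : Fin (n + 1) → α → R)
    (t : α) (y : Fin n → α) :
    (Matrix.of fun i j => f i ((Fin.cons t y : Fin (n + 1) → α) j)).det =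
      ∑ i : Fin (n + 1), (-1) ^ (i : ℕ) * (Matrix.of fun k j => f (i.succAbove k) (y j)).det *
        f i t := by
  rw [Matrix.det_succ_column_zero]
  refine Finset.sum_congr rfl fun i _ => ?_
  simp only [Matrix.of_apply, Fin.cons_zero]
  rw [mul_right_comm]
  rfl

theorem prod_prod_Ioi_cons_sub {R : Type*} [CommRing R] {n : ℕ} (t : R) (y : Fin n → R) :
    ∏ i, ∏ j ∈ Finset.Ioi i,
        ((Fin.cons t y : Fin (n + 1) → R) j - (Fin.cons t y : Fin (n + 1) → R) i) =
      (∏ j, (y j - t)) * ∏ i, ∏ j ∈ Finset.Ioi i, (y j - y i) := by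
  simp [Fin.prod_univ_succ, Fin.prod_Ioi_succ]

theorem abs_det_of_apply_cons_le {n : ℕ} {a b : ℝ} (hab : a < b) {f : Fin (n + 1) → ℝ → ℝ}
    (hf : ∀ i, ContDiffOn ℝ n (f i) (Icc a b)) {M : Fin (n + 1) → ℝ}
    (hM : ∀ i, ∀ ξ ∈ Icc a b, |iteratedDerivWithin n (f i) (Icc a b) ξ| ≤ M i)
    {y : Fin n → ℝ} (hy : Function.Injective y) (hyI : ∀ j, y j ∈ Icc a b)
    {t : ℝ} (ht : t ∈ Icc a b) :
    |(Matrix.of fun i j => f i ((Fin.cons t y : Fin (n + 1) → ℝ) j)).det| ≤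
      (∑ i, M i * |(Matrix.of fun k j => f (i.succAbove k) (y j)).det|) / n.factorial *
        ∏ j, |t - y j| := by
  set m : Fin (n + 1) → ℝ :=
    fun i => (-1) ^ (i : ℕ) * (Matrix.of fun k j => f (i.succAbove k) (y j)).det
  set φ : ℝ → ℝ := fun u => ∑ i, m i * f i u
  have hdet (u : ℝ) :
      (Matrix.of fun i j => f i ((Fin.cons u y : Fin (n + 1) → ℝ) j)).det = φ u :=
    Matrix.det_of_apply_cons f u y
  have hφ : ContDiffOn ℝ n φ (Icc a b) :=
    ContDiffOn.sum fun i _ => contDiffOn_const.mul (hf i)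
  have hφK (ξ : ℝ) (hξ : ξ ∈ Icc a b) : |iteratedDerivWithin n φ (Icc a b) ξ| ≤
      ∑ i, M i * |(Matrix.of fun k j => f (i.succAbove k) (y j)).det| := by
    rw [iteratedDerivWithin_fun_sum hξ (uniqueDiffOn_Icc hab)
      fun i _ => (contDiffOn_const.mul (hf i)) ξ hξ]
    refine (Finset.abs_sum_le_sum_abs _ _).trans (Finset.sum_le_sum fun i _ => ?_)
    rw [iteratedDerivWithin_const_mul_field, abs_mul, mul_comm]
    simp only [m, abs_mul, abs_pow, abs_neg, abs_one, one_pow, one_mul]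
    exact mul_le_mul_of_nonneg_right (hM i ξ hξ) (abs_nonneg _)
  have hφy (u : ℝ) (hu : u ∈ Finset.univ.image y) : φ u = 0 := by
    obtain ⟨j, -, rfl⟩ := Finset.mem_image.1 hu
    rw [← hdet]
    exact Matrix.det_zero_of_column_eq (Fin.succ_ne_zero j).symm fun k => by simp
  have key := abs_le_of_zeros_of_abs_iteratedDerivWithin_le hab hφ hφK
    (by rw [Finset.card_image_of_injective _ hy, Finset.card_fin])
    (by simpa [Set.subset_def] using hyI) hφy ht
  rwa [Finset.prod_image fun i _ j _ h => hy h, ← hdet] at key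

def VandermondeBounded {n : ℕ} (f : Fin n → ℝ → ℝ) (s : Set ℝ) : Prop :=
  ∃ c : ℝ, 0 < c ∧ ∀ x : Fin n → ℝ, (∀ i, x i ∈ s) →
    |(Matrix.of fun i j => f i (x j)).det| ≤ c * |∏ i, ∏ j ∈ Finset.Ioi i, (x j - x i)|

theorem vandermondeBounded_fin_one {a b : ℝ} {f : Fin 1 → ℝ → ℝ}
    (hf : ContinuousOn (f 0) (Icc a b)) : VandermondeBounded f (Icc a b) := by
  obtain ⟨M, hM0, hM⟩ := (contDiffOn_zero.2 hf).exists_pos_bound_iteratedDerivWithin_Icc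
  refine ⟨M, hM0, fun x hx => ?_⟩
  simpa using hM (x 0) (hx 0)

theorem VandermondeBounded.of_succAbove {n : ℕ} {a b : ℝ} {f : Fin (n + 2) → ℝ → ℝ}
    (hf : ∀ i, ContDiffOn ℝ (n + 1 : ℕ) (f i) (Icc a b))
    (h : ∀ i : Fin (n + 2), VandermondeBounded (fun k => f (i.succAbove k)) (Icc a b)) :
    VandermondeBounded f (Icc a b) := by
  choose c hc0 hc using h
  choose M hM0 hM using fun i => (hf i).exists_pos_bound_iteratedDerivWithin_Icc
  refine ⟨(∑ i, M i * c i) / (n + 1).factorial,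
    div_pos (Finset.sum_pos (fun i _ => mul_pos (hM0 i) (hc0 i)) Finset.univ_nonempty)
      (by positivity), fun x hx => ?_⟩
  by_cases hinj : Function.Injective x
  swap
  · obtain ⟨i, j, hij, hne⟩ : ∃ i j, x i = x j ∧ i ≠ j := by
      simpa [Function.Injective] using hinj
    have hV : ∏ i, ∏ j ∈ Finset.Ioi i, (x j - x i) = 0 := by
      rw [← Matrix.det_vandermonde, Matrix.det_vandermonde_eq_zero_iff]
      exact ⟨i, j, hij, hne⟩
    rw [Matrix.det_zero_of_column_eq hne fun k => by simp [hij], hV]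
    simp
  have hab : a < b := by
    by_contra! hba
    exact Fin.zero_ne_one (hinj (((hx 0).2.trans hba).antisymm (hx 0).1 |>.trans
      (((hx 1).2.trans hba).antisymm (hx 1).1).symm))
  obtain ⟨x₀, y, rfl⟩ : ∃ x₀ y, x = Fin.cons x₀ y :=
    ⟨x 0, Fin.tail x, (Fin.cons_self_tail x).symm⟩
  rw [prod_prod_Ioi_cons_sub]
  calc _ ≤ (∑ i : Fin (n + 2), M i * |(Matrix.of fun k j => f (i.succAbove k) (y j)).det|) /
        (n + 1).factorial * ∏ j, |x₀ - y j| :=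
      abs_det_of_apply_cons_le hab hf hM (Fin.cons_injective_iff.1 hinj).2
        (fun j => hx j.succ) (hx 0)
    _ ≤ (∑ i : Fin (n + 2), M i * (c i * |∏ i, ∏ j ∈ Finset.Ioi i, (y j - y i)|)) /
        (n + 1).factorial * ∏ j, |x₀ - y j| := by
      gcongr with i
      · exact (hM0 i).le
      · exact hc i y fun j => hx j.succ
    _ = _ := by
      have hsymm : |∏ j, (y j - x₀)| = ∏ j, |x₀ - y j| := by
        rw [Finset.abs_prod]
        exact Finset.prod_congr rfl fun j _ => abs_sub_comm _ _
      rw [abs_mul, hsymm]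
      simp_rw [← mul_assoc]
      rw [← Finset.sum_mul]
      ring

/-- On a compact interval `[a,b]`, for `f₀, …, fₙ` of class `C^n` there exists `c > 0`
such that `|det[fᵢ(xⱼ)]| ≤ c·|V(x₀, …, xₙ)|` for all `x₀, …, xₙ ∈ [a,b]`. -/
theorem det_le_vandermonde (n : ℕ) (a b : ℝ) (f : Fin (n + 1) → ℝ → ℝ)
    (hf : ∀ i, ContDiffOn ℝ n (f i) (Set.Icc a b)) :
    ∃ c : ℝ, 0 < c ∧ ∀ x : Fin (n + 1) → ℝ, (∀ i, x i ∈ Set.Icc a b) →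
      |Matrix.det (Matrix.of fun i j : Fin (n + 1) => f i (x j))| ≤
        c * |∏ i : Fin (n + 1), ∏ j ∈ Finset.Ioi i, (x j - x i)| := by
  induction n with
  | zero => exact vandermondeBounded_fin_one (hf 0).continuousOn
  | succ n ih =>
    exact VandermondeBounded.of_succAbove hf fun i =>
      ih _ fun k => (hf _).of_le (by exact_mod_cast n.le_succ)
end

section
/- (Weak Jarník theorem) Let I be a compact real interval, let f : I → ℝ be twice continuously differentiable and strictly convex, and let Γ = {(x, f(x)) : x ∈ I} be its graph. Then there exists a constant c > 0, depending only on I and f, such that for every positive integer N, |Γ ∩ Λ_N| ≤ c·N^{2/3}. -/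
/-!
Let `s₀/N < ⋯ < s_n/N` be the abscissae of the points of `Γ ∩ Λ_N` and `t_i/N` their ordinates.
The secant slopes `(t_{i+1} - t_i)/d_i`, with `d_i = s_{i+1} - s_i ≥ 1`, are fractions with
integer numerators; strict convexity makes them increase, so consecutive ones differ by at least
`1/(d_i d_{i+1})`, and since a `C¹` function is Lipschitz on `[a, b]` they all lie in `[-K, K]`.
Hence at most `2K r²` consecutive pairs have `d_i d_{i+1} ≤ r²`. Every other pair contains some
`d_j ≥ r`, and as `∑ d_i ≤ N (b - a)` there are at most `N (b - a)/r` such `j`.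
Taking `r = N^{1/3}` gives `n = O(N^{2/3})`.
-/

open Set

open Finset in
theorem Finset.card_filter_nsmul_le_sum {ι M : Type*} [AddCommMonoid M] [PartialOrder M]
    [IsOrderedAddMonoid M] (s : Finset ι) (p : ι → Prop) [DecidablePred p] (f : ι → M) (c : M)
    (hp : ∀ i ∈ s, p i → c ≤ f i) (hf : ∀ i ∈ s, 0 ≤ f i) :
    #{i ∈ s | p i} • c ≤ ∑ i ∈ s, f i := by
  refine (card_nsmul_le_sum _ f c fun i hi => ?_).trans
    (sum_le_sum_of_subset_of_nonneg (filter_subset p s) fun i hi _ => hf i hi)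
  rw [mem_filter] at hi
  exact hp i hi.1 hi.2

open Finset in
theorem card_le_of_slope_gaps {n : ℕ} {d l : ℕ → ℝ} {r : ℝ} (hr : 0 < r)
    (hd : ∀ i < n, 1 ≤ d i)
    (hgap : ∀ i, i + 1 < n → 1 / (d i * d (i + 1)) ≤ l (i + 1) - l i) :
    (n : ℝ) ≤ 1 + (l (n - 1) - l 0) * r ^ 2 + 2 * (∑ i ∈ range n, d i) / r := by
  have hdd : ∀ i ∈ range (n - 1), 0 < d i * d (i + 1) := fun i hi => by
    have := mem_range.1 hi
    nlinarith [hd i (by omega), hd (i + 1) (by omega)]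
  set short := {i ∈ range (n - 1) | d i * d (i + 1) ≤ r ^ 2}
  set long := {i ∈ range (n - 1) | ¬d i * d (i + 1) ≤ r ^ 2}
  set big := {j ∈ range n | r ≤ d j}
  have hshort : (#short : ℝ) ≤ (l (n - 1) - l 0) * r ^ 2 := by
    have key := card_filter_nsmul_le_sum (range (n - 1)) (fun i => d i * d (i + 1) ≤ r ^ 2)
      (fun i => l (i + 1) - l i) (1 / r ^ 2)
      (fun i hi hle => (one_div_le_one_div_of_le (hdd i hi) hle).trans
        (hgap i (by have := mem_range.1 hi; omega)))
      (fun i hi => (one_div_pos.2 (hdd i hi)).le.trans (hgap i (by have := mem_range.1 hi; omega)))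
    rw [sum_range_sub, nsmul_eq_mul, mul_one_div, div_le_iff₀ (by positivity)] at key
    exact key
  have hbig : (#big : ℝ) ≤ (∑ i ∈ range n, d i) / r := by
    have key := card_filter_nsmul_le_sum (range n) (fun j => r ≤ d j) d r (fun _ _ h => h)
      (fun i hi => zero_le_one.trans (hd i (mem_range.1 hi)))
    rwa [nsmul_eq_mul, ← le_div_iff₀ hr] at key
  have hlong : #long ≤ 2 * #big := by
    have hsub : long ⊆ big ∪ big.image (· - 1) := by
      intro i hi
      simp only [long, big, Finset.mem_filter, Finset.mem_range, Finset.mem_union,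
        Finset.mem_image] at hi ⊢
      by_contra! hcon
      have h1 : d i < r := hcon.1 (by omega)
      have h2 : d (i + 1) < r := by
        by_contra! h; exact (hcon.2 (i + 1) ⟨by omega, h⟩) rfl
      nlinarith [hd i (by omega)]
    calc #long ≤ #big + #(big.image (· - 1)) :=
          (Finset.card_le_card hsub).trans (card_union_le _ _)
      _ ≤ 2 * #big := by linarith [card_image_le (s := big) (f := (· - 1))]
  have hsplit : n ≤ 1 + #short + #long := by
    have : #short + #long = #(range (n - 1)) := card_filter_add_card_filter_not _
    rw [card_range] at this
    omega
  have hsplit' : (n : ℝ) ≤ 1 + #short + #long := by exact_mod_cast hsplit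
  have hlong' : (#long : ℝ) ≤ 2 * #big := by exact_mod_cast hlong
  rw [mul_div_assoc]
  linarith

theorem one_div_mul_le_div_sub_div {p q u v : ℤ} (hq : 0 < q) (hv : 0 < v)
    (h : (p : ℝ) / q < u / v) : 1 / ((q : ℝ) * v) ≤ u / v - p / q := by
  have hq' : (0 : ℝ) < q := by exact_mod_cast hq
  have hv' : (0 : ℝ) < v := by exact_mod_cast hv
  have hcross : p * v < u * q := by
    exact_mod_cast (div_lt_div_iff₀ hq' hv').1 h
  rw [div_sub_div _ _ hv'.ne' hq'.ne', mul_comm (v : ℝ) q]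
  refine div_le_div_of_nonneg_right ?_ (mul_pos hq' hv').le
  have : (1 : ℤ) ≤ u * q - v * p := by linarith
  exact_mod_cast this

theorem LipschitzOnWith.abs_slope_le {f : ℝ → ℝ} {K : NNReal} {s : Set ℝ}
    (hf : LipschitzOnWith K f s) {x y : ℝ} (hx : x ∈ s) (hy : y ∈ s) :
    |(f y - f x) / (y - x)| ≤ K := by
  rcases eq_or_ne y x with rfl | hxy
  · simp
  rw [abs_div, div_le_iff₀ (abs_pos.2 (sub_ne_zero.2 hxy))]
  simpa only [Real.dist_eq] using hf.dist_le_mul y hy x hx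

theorem card_le_rpow_of_slope_gaps {n N : ℕ} (hN : 0 < N) {d l : ℕ → ℝ} {D L : ℝ}
    (hd : ∀ i < n, 1 ≤ d i)
    (hgap : ∀ i, i + 1 < n → 1 / (d i * d (i + 1)) ≤ l (i + 1) - l i)
    (hspan : l (n - 1) - l 0 ≤ D) (hlength : ∑ i ∈ Finset.range n, d i ≤ N * L) :
    (n + 1 : ℝ) ≤ (2 + D + 2 * L) * (N : ℝ) ^ ((2 : ℝ) / 3) := by
  have hN0 : (0 : ℝ) < N := by exact_mod_cast hN
  set r := (N : ℝ) ^ ((3 : ℕ)⁻¹ : ℝ) with hr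
  have hr1 : 1 ≤ r := Real.one_le_rpow (by exact_mod_cast hN) (by positivity)
  have hr_cube : (N : ℝ) = r ^ 3 := (Real.rpow_inv_natCast_pow hN0.le three_ne_zero).symm
  have hr_sq : (N : ℝ) ^ ((2 : ℝ) / 3) = r ^ 2 := by
    rw [hr, ← Real.rpow_mul_natCast hN0.le]; norm_num
  have hcount := card_le_of_slope_gaps (zero_lt_one.trans_le hr1) hd hgap
  have hslopes : (l (n - 1) - l 0) * r ^ 2 ≤ D * r ^ 2 := by gcongr
  have hlengths : 2 * (∑ i ∈ Finset.range n, d i) / r ≤ 2 * L * r ^ 2 := by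
    rw [hr_cube] at hlength
    rw [div_le_iff₀ (by positivity)]
    nlinarith
  have hr_sq1 : 1 ≤ r ^ 2 := one_le_pow₀ hr1
  rw [hr_sq]
  linarith

theorem card_le_of_strictConvexOn_of_lattice {f : ℝ → ℝ} {a b : ℝ} {K : NNReal}
    (hconv : StrictConvexOn ℝ (Icc a b) f) (hlip : LipschitzOnWith K f (Icc a b))
    {N : ℕ} (hN : 0 < N) {m : ℕ} {s t : ℕ → ℤ} (hs : StrictMonoOn s (Iio m))
    (hmem : ∀ i < m, (s i / N : ℝ) ∈ Icc a b) (ht : ∀ i < m, f (s i / N) = t i / N) :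
    (m : ℝ) ≤ (2 + 2 * K + 2 * |b - a|) * (N : ℝ) ^ ((2 : ℝ) / 3) := by
  obtain _ | n := m
  · simp only [CharP.cast_eq_zero]; positivity
  have hN0 : (0 : ℝ) < N := by exact_mod_cast hN
  let x : ℕ → ℝ := fun i => s i / N
  let d : ℕ → ℝ := fun i => ((s (i + 1) - s i : ℤ) : ℝ)
  let l : ℕ → ℝ := fun i => ((t (i + 1) - t i : ℤ) : ℝ) / d i
  have hs_step : ∀ i < n, s i < s (i + 1) := fun i hi =>
    hs (show i < n + 1 by omega) (show i + 1 < n + 1 by omega) (by omega)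
  have hx_step : ∀ i < n, x i < x (i + 1) := fun i hi => by
    simp only [x]; gcongr; exact_mod_cast hs_step i hi
  have hl_slope : ∀ i < n, l i = (f (x (i + 1)) - f (x i)) / (x (i + 1) - x i) := fun i hi => by
    simp only [l, d, x]
    rw [ht i (by omega), ht (i + 1) (by omega), div_sub_div_same, div_sub_div_same,
      div_div_div_cancel_right₀ hN0.ne']
    push_cast; rfl
  have hl_step : ∀ i, i + 1 < n → l i < l (i + 1) := fun i hi => by
    rw [hl_slope i (by omega), hl_slope (i + 1) hi]
    exact hconv.slope_strict_mono_adjacent (hmem i (by omega)) (hmem (i + 2) (by omega))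
      (hx_step i (by omega)) (hx_step (i + 1) hi)
  have hl_abs : ∀ i < n, |l i| ≤ K := fun i hi => by
    rw [hl_slope i hi]
    exact hlip.abs_slope_le (hmem i (by omega)) (hmem (i + 1) (by omega))
  have hd : ∀ i < n, 1 ≤ d i := fun i hi => by
    have : (1 : ℤ) ≤ s (i + 1) - s i := by linarith [hs_step i hi]
    simp only [d]; exact_mod_cast this
  have hgap : ∀ i, i + 1 < n → 1 / (d i * d (i + 1)) ≤ l (i + 1) - l i := fun i hi =>
    one_div_mul_le_div_sub_div (sub_pos.2 (hs_step i (by omega))) (sub_pos.2 (hs_step (i + 1) hi))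
      (hl_step i hi)
  have hspan : l (n - 1) - l 0 ≤ 2 * K := by
    rcases Nat.eq_zero_or_pos n with rfl | hn
    · simp
    linarith [(abs_le.1 (hl_abs 0 hn)).1, (abs_le.1 (hl_abs (n - 1) (by omega))).2]
  have hlength : ∑ i ∈ Finset.range n, d i ≤ N * |b - a| := by
    have hsum : ∑ i ∈ Finset.range n, d i = N * (x n - x 0) := by
      simp only [d, x, Int.cast_sub, Finset.sum_range_sub (fun i => (s i : ℝ))]
      field_simp
    have := (hmem n (by omega)).2
    have := (hmem 0 (by omega)).1
    rw [hsum]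
    gcongr
    exact (le_abs_self _).trans' (by linarith)
  push_cast
  exact card_le_rpow_of_slope_gaps hN hd hgap hspan hlength

theorem Set.Finite.exists_strictMonoOn_mem {α : Type*} [LinearOrder α] [Nonempty α] {S : Set α}
    (hS : S.Finite) : ∃ x : ℕ → α, StrictMonoOn x (Iio S.ncard) ∧ ∀ i < S.ncard, x i ∈ S := by
  classical
  let e := hS.toFinset.orderEmbOfFin (ncard_eq_toFinset_card S hS).symm
  refine ⟨fun i => if h : i < S.ncard then e ⟨i, h⟩ else Classical.arbitrary α, ?_, ?_⟩
  · intro i hi j hj hij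
    simp only [dif_pos (show i < S.ncard from hi), dif_pos (show j < S.ncard from hj)]
    exact e.strictMono hij
  · intro i hi
    simp only [dif_pos hi]
    exact hS.mem_toFinset.1 (Finset.orderEmbOfFin_mem _ _ _)

/-- Weak Jarník theorem: the graph of a strictly convex `C²` function on a compact
interval meets the lattice `Λ_N = (1/N)ℤ²` in at most `c·N^{2/3}` points. -/
theorem weak_jarnik (a b : ℝ) (f : ℝ → ℝ)
    (hf : ContDiffOn ℝ 2 f (Icc a b))
    (hconv : StrictConvexOn ℝ (Icc a b) f) :
    ∃ c : ℝ, 0 < c ∧ ∀ N : ℕ, 0 < N →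
      ((fun x => (x, f x)) '' Icc a b ∩
          {p : ℝ × ℝ | ∃ s t : ℤ, p.1 = (s : ℝ) / N ∧ p.2 = (t : ℝ) / N}).Finite ∧
      (((fun x => (x, f x)) '' Icc a b ∩
          {p : ℝ × ℝ | ∃ s t : ℤ, p.1 = (s : ℝ) / N ∧ p.2 = (t : ℝ) / N}).ncard : ℝ) ≤
        c * (N : ℝ) ^ ((2:ℝ)/3) := by
  obtain ⟨K, hK⟩ := hf.exists_lipschitzOnWith two_ne_zero (convex_Icc a b) isCompact_Icc
  refine ⟨2 + 2 * K + 2 * |b - a|, by positivity, fun N hN => ?_⟩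
  have hN0 : (0 : ℝ) < N := by exact_mod_cast hN
  set S : Set ℤ := {s | (s / N : ℝ) ∈ Icc a b ∧ ∃ t : ℤ, f (s / N) = t / N}
  have hS : S.Finite := (finite_Icc ⌈N * a⌉ ⌊N * b⌋).subset fun s hs => by
    obtain ⟨⟨ha, hb⟩, -⟩ := hs
    rw [le_div_iff₀ hN0] at ha
    rw [div_le_iff₀ hN0] at hb
    exact ⟨Int.ceil_le.2 (by linarith), Int.le_floor.2 (by linarith)⟩
  have hsub : (fun x => (x, f x)) '' Icc a b ∩
      {p : ℝ × ℝ | ∃ s t : ℤ, p.1 = (s : ℝ) / N ∧ p.2 = (t : ℝ) / N} ⊆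
      (fun s : ℤ => ((s : ℝ) / N, f (s / N))) '' S := by
    rintro _ ⟨⟨x, hx, rfl⟩, s, t, rfl, hst⟩
    exact ⟨s, ⟨hx, t, hst⟩, rfl⟩
  refine ⟨(hS.image _).subset hsub, ?_⟩
  obtain ⟨s, hs_mono, hs_mem⟩ := hS.exists_strictMonoOn_mem
  choose! t ht using fun i hi => (hs_mem i hi).2
  calc _ ≤ (S.ncard : ℝ) := by
        exact_mod_cast (ncard_le_ncard hsub (hS.image _)).trans (ncard_image_le hS)
    _ ≤ _ := card_le_of_strictConvexOn_of_lattice hconv hK hN hs_mono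
        (fun i hi => (hs_mem i hi).1) ht
end

section
/- Let I be a compact real interval, let f : I → ℝ be twice continuously differentiable, and let Γ = {(x, f(x)) : x ∈ I} be its graph. There is a constant c > 0, depending only on I and f, with the following property: for every positive integer N, if points P₀, …, P_k ∈ Γ ∩ Λ_N, with P_i = (x_i, y_i), are such that x₀, …, x_k all lie in an interval of length smaller than c·N^{−2/3}, then P₀, …, P_k lie on a single straight line. -/
/-!
As `f` is `C²` on a compact interval, `f'` is `K`-Lipschitz there. A first-order Taylor
expansion at `x₀` then bounds the cross product of `P - P₀` and `Q - P₀` by `2 K L³` in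
absolute value, for any three points of the graph whose abscissas are within `L` of each other. For points of `Λ_N` this cross product lies in
`N⁻² ℤ`, so once `2 K L³ < N⁻²` it vanishes, and all points lie on the line through `P₀` and
any other of them.
-/

open Set

open scoped NNReal

def cross (v w : ℝ × ℝ) : ℝ := v.1 * w.2 - v.2 * w.1

/-- The lattice `Λ_N = (1/N)ℤ²`. -/
def scaledLattice (N : ℕ) : Set (ℝ × ℝ) :=
  {p | ∃ s t : ℤ, p.1 = (s : ℝ) / N ∧ p.2 = (t : ℝ) / N}

theorem exists_eq_smul_of_cross_eq_zero {v w : ℝ × ℝ} (hv : v ≠ 0) (h : cross v w = 0) :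
    ∃ r : ℝ, w = r • v := by
  unfold cross at h
  by_cases h₁ : v.1 = 0
  · have h₂ : v.2 ≠ 0 := fun h₂ => hv (Prod.ext h₁ h₂)
    refine ⟨w.2 / v.2, Prod.ext ?_ ?_⟩
    · simp only [Prod.smul_fst, smul_eq_mul]
      field_simp
      linarith
    · simp only [Prod.smul_snd, smul_eq_mul]
      field_simp
  · refine ⟨w.1 / v.1, Prod.ext ?_ ?_⟩
    · simp only [Prod.smul_fst, smul_eq_mul]
      field_simp
    · simp only [Prod.smul_snd, smul_eq_mul]
      field_simp
      linarith

theorem collinear_range_of_cross_sub_eq_zero {ι : Type*} {P : ι → ℝ × ℝ} (i₀ : ι)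
    (h : ∀ i j, cross (P i - P i₀) (P j - P i₀) = 0) : Collinear ℝ (range P) := by
  by_cases hconst : ∀ i, P i = P i₀
  · refine (collinear_singleton ℝ (P i₀)).subset ?_
    rintro _ ⟨i, rfl⟩
    exact hconst i
  push Not at hconst
  obtain ⟨m, hm⟩ := hconst
  rw [collinear_iff_of_mem (mem_range_self i₀)]
  refine ⟨P m - P i₀, ?_⟩
  rintro _ ⟨i, rfl⟩
  obtain ⟨r, hr⟩ := exists_eq_smul_of_cross_eq_zero (sub_ne_zero.2 hm) (h m i)
  exact ⟨r, by rw [← hr, vadd_eq_add, sub_add_cancel]⟩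

theorem cross_sub_eq_zero_of_mem_scaledLattice {N : ℕ} (hN : 0 < N) {P₀ P Q : ℝ × ℝ}
    (h₀ : P₀ ∈ scaledLattice N) (hP : P ∈ scaledLattice N) (hQ : Q ∈ scaledLattice N)
    (hsmall : |cross (P - P₀) (Q - P₀)| < ((N : ℝ) ^ 2)⁻¹) :
    cross (P - P₀) (Q - P₀) = 0 := by
  obtain ⟨s₀, t₀, hs₀, ht₀⟩ := h₀
  obtain ⟨s₁, t₁, hs₁, ht₁⟩ := hP
  obtain ⟨s₂, t₂, hs₂, ht₂⟩ := hQ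
  set M : ℤ := (s₁ - s₀) * (t₂ - t₀) - (t₁ - t₀) * (s₂ - s₀)
  have hN' : (0 : ℝ) < (N : ℝ) ^ 2 := by positivity
  have hM : cross (P - P₀) (Q - P₀) = M / (N : ℝ) ^ 2 := by
    simp only [cross, Prod.fst_sub, Prod.snd_sub, hs₀, ht₀, hs₁, ht₁, hs₂, ht₂, M]
    push_cast
    field_simp
  rw [hM, abs_div, abs_of_pos hN', div_lt_iff₀ hN', inv_mul_cancel₀ hN'.ne', ← Int.cast_abs,
    ← Int.cast_one, Int.cast_lt, Int.abs_lt_one_iff] at hsmall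
  rw [hM, hsmall, Int.cast_zero, zero_div]

section Taylor

variable {E : Type*} [NormedAddCommGroup E] [NormedSpace ℝ E]

theorem ContDiffOn.exists_lipschitzOnWith_derivWithin_Icc {a b : ℝ} {f : ℝ → E}
    (hf : ContDiffOn ℝ 2 f (Icc a b)) :
    ∃ K, LipschitzOnWith K (derivWithin f (Icc a b)) (Icc a b) := by
  rcases lt_or_ge a b with hab | hba
  · exact (hf.derivWithin (uniqueDiffOn_Icc hab) (by norm_num)).exists_lipschitzOnWith
      one_ne_zero (convex_Icc a b) isCompact_Icc
  · refine ⟨0, LipschitzOnWith.of_dist_le_mul fun x hx y hy => ?_⟩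
    simp [subsingleton_Icc_of_ge hba hx hy]

theorem Convex.norm_image_sub_sub_smul_le_of_lipschitzOnWith {s : Set ℝ} (hs : Convex ℝ s)
    {f f' : ℝ → E} {K : ℝ≥0} (hf : ∀ x ∈ s, HasDerivWithinAt f (f' x) s x)
    (hf' : LipschitzOnWith K f' s) {p z : ℝ} (hp : p ∈ s) (hz : z ∈ s) :
    ‖f z - f p - (z - p) • f' p‖ ≤ K * |z - p| ^ 2 := by
  have hts : uIcc p z ⊆ s := by simpa [segment_eq_uIcc] using hs.segment_subset hp hz
  have hderiv : ∀ x ∈ uIcc p z,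
      HasDerivWithinAt (fun x => f x - (x - p) • f' p) (f' x - f' p) (uIcc p z) x := by
    intro x hx
    simpa only [one_smul] using ((hf x (hts hx)).mono hts).fun_sub
      (((hasDerivAt_id' x).sub_const p).smul_const (f' p)).hasDerivWithinAt
  have hbound : ∀ x ∈ uIcc p z, ‖f' x - f' p‖ ≤ K * |z - p| := fun x hx =>
    calc ‖f' x - f' p‖ ≤ K * |x - p| := by
          simpa only [dist_eq_norm, Real.norm_eq_abs] using hf'.dist_le_mul x (hts hx) p hp
      _ ≤ K * |z - p| := mul_le_mul_of_nonneg_left (abs_sub_left_of_mem_uIcc hx) K.2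
  have := (convex_uIcc p z).norm_image_sub_le_of_norm_hasDerivWithin_le hderiv hbound
    left_mem_uIcc right_mem_uIcc
  rwa [sub_self, zero_smul, sub_zero, sub_right_comm, Real.norm_eq_abs, mul_assoc, ← sq] at this

end Taylor

theorem Convex.abs_cross_graph_sub_le {s : Set ℝ} (hs : Convex ℝ s)
    {f f' : ℝ → ℝ} {K : ℝ≥0} (hf : ∀ x ∈ s, HasDerivWithinAt f (f' x) s x)
    (hf' : LipschitzOnWith K f' s) {x₀ x y L : ℝ} (h₀ : x₀ ∈ s) (hx : x ∈ s) (hy : y ∈ s)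
    (hxL : |x - x₀| ≤ L) (hyL : |y - x₀| ≤ L) :
    |cross ((x, f x) - (x₀, f x₀)) ((y, f y) - (x₀, f x₀))| ≤ 2 * K * L ^ 3 := by
  have hL₀ : 0 ≤ L := (abs_nonneg _).trans hxL
  set R : ℝ → ℝ := fun z => f z - f x₀ - (z - x₀) * f' x₀
  have hR : ∀ z ∈ s, |z - x₀| ≤ L → |R z| ≤ K * L ^ 2 := fun z hz hzL =>
    (hs.norm_image_sub_sub_smul_le_of_lipschitzOnWith hf hf' h₀ hz).trans (by gcongr)
  have hcross : cross ((x, f x) - (x₀, f x₀)) ((y, f y) - (x₀, f x₀))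
      = (x - x₀) * R y - (y - x₀) * R x := by
    simp only [cross, R, Prod.mk_sub_mk]
    ring
  rw [hcross]
  calc |(x - x₀) * R y - (y - x₀) * R x| ≤ |x - x₀| * |R y| + |y - x₀| * |R x| := by
        rw [← abs_mul, ← abs_mul]; exact abs_sub _ _
    _ ≤ L * (K * L ^ 2) + L * (K * L ^ 2) :=
        add_le_add (mul_le_mul hxL (hR y hy hyL) (abs_nonneg _) hL₀)
          (mul_le_mul hyL (hR x hx hxL) (abs_nonneg _) hL₀)
    _ = 2 * K * L ^ 3 := by ring

theorem two_mul_mul_pow_three_lt_inv_sq {K L : ℝ} {N : ℕ} (hK : 0 ≤ K) (hN : 0 < N)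
    (hL₀ : 0 ≤ L) (hL : L < (2 * K + 1)⁻¹ * (N : ℝ) ^ (-(2 : ℝ) / 3)) :
    2 * K * L ^ 3 < ((N : ℝ) ^ 2)⁻¹ := by
  set c := (2 * K + 1)⁻¹
  have hc₀ : 0 < c := by positivity
  have hc₁ : c ≤ 1 := inv_le_one_of_one_le₀ (by linarith)
  have hN₀ : (0 : ℝ) < N := by exact_mod_cast hN
  have hcube : ((N : ℝ) ^ (-(2 : ℝ) / 3)) ^ 3 = ((N : ℝ) ^ 2)⁻¹ := by
    rw [← Real.rpow_mul_natCast hN₀.le, ← Real.rpow_natCast, ← Real.rpow_neg hN₀.le]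
    norm_num
  calc 2 * K * L ^ 3 ≤ 2 * K * (c ^ 3 * ((N : ℝ) ^ 2)⁻¹) := by
        rw [← hcube, ← mul_pow]; gcongr
    _ ≤ 2 * K * c * ((N : ℝ) ^ 2)⁻¹ := by
        rw [mul_assoc (2 * K)]; gcongr; exact pow_le_of_le_one hc₀.le hc₁ (by norm_num)
    _ < ((N : ℝ) ^ 2)⁻¹ := by
        have : 2 * K * c < 1 := by
          rw [← div_eq_mul_inv, div_lt_one (by linarith)]; linarith
        nlinarith [inv_pos.2 (pow_pos hN₀ 2)]

/-- For the graph `Γ` of a `C²` function on a compact interval there is `c > 0` such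
that any points of `Γ ∩ Λ_N` whose abscissas lie in an interval of length smaller than
`c·N^{-2/3}` are collinear. -/
theorem collinear_on_short_intervals (a b : ℝ) (f : ℝ → ℝ)
    (hf : ContDiffOn ℝ 2 f (Icc a b)) :
    ∃ c : ℝ, 0 < c ∧ ∀ N : ℕ, 0 < N → ∀ k : ℕ, ∀ P : Fin (k + 1) → ℝ × ℝ,
      (∀ i, P i ∈ (fun x => (x, f x)) '' Icc a b ∩
          {p : ℝ × ℝ | ∃ s t : ℤ, p.1 = (s : ℝ) / N ∧ p.2 = (t : ℝ) / N}) →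
      (∃ u v : ℝ, v - u < c * (N : ℝ) ^ (-(2:ℝ)/3) ∧ ∀ i, (P i).1 ∈ Icc u v) →
      Collinear ℝ (Set.range P) := by
  obtain ⟨K, hK⟩ := hf.exists_lipschitzOnWith_derivWithin_Icc
  have hderiv : ∀ x ∈ Icc a b, HasDerivWithinAt f (derivWithin f (Icc a b) x) (Icc a b) x :=
    fun x hx => (hf.differentiableOn (by norm_num) x hx).hasDerivWithinAt
  refine ⟨(2 * K + 1)⁻¹, by positivity, fun N hN k P hP ⟨u, v, huv, hPuv⟩ => ?_⟩
  choose x hx hPx using fun i => (hP i).1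
  have hxuv : ∀ i, x i ∈ Icc u v := fun i => by simpa [← hPx i] using hPuv i
  have hclose : ∀ i, |x i - x 0| ≤ v - u := fun i => Real.dist_le_of_mem_Icc (hxuv i) (hxuv 0)
  have hsmall : 2 * K * (v - u) ^ 3 < ((N : ℝ) ^ 2)⁻¹ :=
    two_mul_mul_pow_three_lt_inv_sq K.2 hN ((abs_nonneg _).trans (hclose 0)) huv
  refine collinear_range_of_cross_sub_eq_zero 0 fun i j =>
    cross_sub_eq_zero_of_mem_scaledLattice hN (hP 0).2 (hP i).2 (hP j).2 ?_
  rw [← hPx 0, ← hPx i, ← hPx j]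
  exact ((convex_Icc a b).abs_cross_graph_sub_le hderiv hK (hx 0) (hx i) (hx j) (hclose i)
    (hclose j)).trans_lt hsmall
end
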